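/- A finite simple graph G is König-Egerváry if and only if diadem(G) = corona(G). -/

import Mathlib

open Set

variable {V : Type*} [Fintype V]

/-- `S` is an independent set in `G`: no two of its vertices are adjacent. -/
def IsIndep (G : SimpleGraph V) (S : Set V) : Prop :=
  ∀ u ∈ S, ∀ v ∈ S, ¬ G.Adj u v

/-- The neighborhood `N(X)` of a set of vertices. -/
def nbhd (G : SimpleGraph V) (X : Set V) : Set V := {v | ∃ u ∈ X, G.Adj u v}

/-- The difference `d(X) = |X| - |N(X)|` computed in the induced subgraph `G[W]`
(neighborhoods are intersected with `W`). -/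
noncomputable def dOn (G : SimpleGraph V) (W X : Set V) : ℤ :=
  (X.ncard : ℤ) - ((nbhd G X ∩ W).ncard : ℤ)

/-- The difference `d(X) = |X| - |N(X)|` in `G`. -/
noncomputable def dG (G : SimpleGraph V) (X : Set V) : ℤ := dOn G Set.univ X

/-- `S` is a critical independent set of the induced subgraph `G[W]`:
it is an independent subset of `W` whose difference attains
`max {d(Y) : Y ⊆ W}` (the critical difference of `G[W]`). -/
def IsCritIndepOn (G : SimpleGraph V) (W S : Set V) : Prop :=
  S ⊆ W ∧ IsIndep G S ∧ ∀ Y ⊆ W, dOn G W Y ≤ dOn G W S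

/-- `S` is a critical independent set of `G`. -/
def IsCritIndep (G : SimpleGraph V) (S : Set V) : Prop := IsCritIndepOn G Set.univ S

/-- A maximum critical independent set of `G[W]`: a critical independent set of
largest cardinality. -/
def IsMaxCritIndepOn (G : SimpleGraph V) (W S : Set V) : Prop :=
  IsCritIndepOn G W S ∧ ∀ T, IsCritIndepOn G W T → T.ncard ≤ S.ncard

/-- A maximum critical independent set of `G`. -/
def IsMaxCritIndep (G : SimpleGraph V) (S : Set V) : Prop := IsMaxCritIndepOn G Set.univ S

/-- A maximum independent set of the induced subgraph `G[W]`. -/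
def IsMaxIndepOn (G : SimpleGraph V) (W S : Set V) : Prop :=
  S ⊆ W ∧ IsIndep G S ∧ ∀ T ⊆ W, IsIndep G T → T.ncard ≤ S.ncard

/-- A maximum independent set of `G`. -/
def IsMaxIndep (G : SimpleGraph V) (S : Set V) : Prop := IsMaxIndepOn G Set.univ S

/-- The independence number of the induced subgraph `G[W]`. -/
noncomputable def alphaOn (G : SimpleGraph V) (W : Set V) : ℕ :=
  sSup {n | ∃ S ⊆ W, IsIndep G S ∧ S.ncard = n}

/-- The independence number `α(G)`. -/
noncomputable def alpha (G : SimpleGraph V) : ℕ := alphaOn G Set.univ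

/-- The maximum matching number `μ(G)`. -/
noncomputable def mu (G : SimpleGraph V) : ℕ :=
  sSup {n | ∃ M : G.Subgraph, M.IsMatching ∧ M.edgeSet.ncard = n}

/-- `G` is a König-Egerváry graph: `α(G) + μ(G) = |V(G)|`. -/
def IsKE (G : SimpleGraph V) : Prop := alpha G + mu G = Fintype.card V

/-- `nucleus(G[W])`: intersection of all maximum critical independent sets of `G[W]`. -/
def nucleusOn (G : SimpleGraph V) (W : Set V) : Set V := ⋂₀ {S | IsMaxCritIndepOn G W S}

/-- `nucleus(G)`. -/
def nucleus (G : SimpleGraph V) : Set V := nucleusOn G Set.univ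

/-- `diadem(G[W])`: union of all maximum critical independent sets of `G[W]`. -/
def diademOn (G : SimpleGraph V) (W : Set V) : Set V := ⋃₀ {S | IsMaxCritIndepOn G W S}

/-- `diadem(G)`. -/
def diadem (G : SimpleGraph V) : Set V := diademOn G Set.univ

/-- `ker(G)`: intersection of all critical independent sets of `G`. -/
def kerG (G : SimpleGraph V) : Set V := ⋂₀ {S | IsCritIndep G S}

/-- `core(G)`: intersection of all maximum independent sets of `G`. -/
def core (G : SimpleGraph V) : Set V := ⋂₀ {S | IsMaxIndep G S}

/-- `corona(G)`: union of all maximum independent sets of `G`. -/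
def corona (G : SimpleGraph V) : Set V := ⋃₀ {S | IsMaxIndep G S}

/-!
If `G` is König–Egerváry, a maximum independent set `S` has `d(S) ≥ 2α - n = n - 2μ`, while every
set `Y` has `d(Y) ≤ n - 2μ`, because the matched vertices of `Y` have distinct partners in `N(Y)`.
So the maximum critical independent sets are exactly the maximum independent sets.

Conversely, let `S` be a maximum critical independent set. Criticality of `S` is Hall's condition
for matching `N(S)` into `S`, so an independent set meets `S ∪ N(S)` in at most `|S|` vertices and
`S` extends to a maximum independent set `S ∪ J` with `J` outside `S ∪ N(S)`. By supermodularity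
of `d` and that matching, every maximum critical independent set `T` lies in `S ∪ N(S)`, since
otherwise `S ∪ (T \ (S ∪ N(S)))` would be a larger critical independent set. Hence
`diadem = corona` forces `J = ∅`; then `N(S) = V \ S` is matched into `S`, so `μ ≥ n - α`.
-/

theorem exists_injOn_of_forall_ncard_le {α : Type*} [Finite α] {A : Set α} (r : α → α → Prop)
    (h : ∀ T ⊆ A, T.ncard ≤ {b | ∃ a ∈ T, r a b}.ncard) :
    ∃ f : α → α, InjOn f A ∧ ∀ a ∈ A, r a (f a) := by
  classical
  have := Fintype.ofFinite α
  obtain ⟨f, hf_inj, hf_rel⟩ :=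
    (Fintype.all_card_le_filter_rel_iff_exists_injective (fun (a : A) b => r a b)).mp fun T => by
      have hT := h (Subtype.val '' (T : Set A)) (by simp)
      rw [ncard_image_of_injective _ Subtype.val_injective, ncard_coe_finset] at hT
      refine hT.trans_eq ?_
      rw [← ncard_coe_finset]
      congr 1
      ext b
      simp
  refine ⟨fun a => if ha : a ∈ A then f ⟨a, ha⟩ else a, fun a ha b hb hab => ?_, fun a ha => ?_⟩
  · exact congrArg Subtype.val (hf_inj (by simpa [ha, hb] using hab))
  · simpa [ha] using hf_rel ⟨a, ha⟩

namespace SimpleGraph.Subgraph.IsMatching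

theorem ncard_verts_eq_two_mul {W : Type*} [Finite W] {G : SimpleGraph W} {M : G.Subgraph}
    (hM : M.IsMatching) : M.verts.ncard = 2 * M.edgeSet.ncard := by
  classical
  have := Fintype.ofFinite M.verts
  have := Fintype.ofFinite M.edgeSet
  rw [← Nat.card_coe_set_eq, ← Nat.card_coe_set_eq, Nat.card_eq_fintype_card,
    Nat.card_eq_fintype_card, ← Finset.card_univ,
    Finset.card_eq_sum_card_fiberwise (f := hM.toEdge) (t := Finset.univ) (by simp),
    Finset.sum_const_nat (m := 2), Finset.card_univ, mul_comm]
  rintro ⟨e, he⟩ -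
  induction e with
  | _ v w =>
  refine Finset.card_eq_two.mpr ⟨⟨v, he.fst_mem⟩, ⟨w, he.snd_mem⟩,
    fun h => he.ne (congrArg Subtype.val h), ?_⟩
  ext x
  simpa using Set.ext_iff.mp (hM.toEdge_preimage_singleton he) x

end SimpleGraph.Subgraph.IsMatching

section

variable {α : Type*} {G : SimpleGraph α}

theorem nbhd_mono {X Y : Set α} (h : X ⊆ Y) : nbhd G X ⊆ nbhd G Y :=
  fun _ ⟨u, hu, huv⟩ => ⟨u, h hu, huv⟩

theorem nbhd_union (X Y : Set α) : nbhd G (X ∪ Y) = nbhd G X ∪ nbhd G Y := by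
  ext v
  simp only [nbhd, mem_ofPred_eq, mem_union, or_and_right, exists_or]

theorem dOn_univ (X : Set α) : dOn G univ X = X.ncard - (nbhd G X).ncard := by
  simp [dOn]

theorem IsIndep.mono {S T : Set α} (hS : IsIndep G S) (hT : T ⊆ S) : IsIndep G T :=
  fun u hu v hv => hS u (hT hu) v (hT hv)

theorem IsIndep.disjoint_nbhd {S : Set α} (hS : IsIndep G S) : Disjoint S (nbhd G S) :=
  disjoint_left.mpr fun v hv ⟨u, hu, huv⟩ => hS u hu v hv huv

theorem IsIndep.union_of_subset_compl {S J : Set α} (hS : IsIndep G S) (hJ : IsIndep G J)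
    (hJS : J ⊆ (S ∪ nbhd G S)ᶜ) : IsIndep G (S ∪ J) := by
  rintro u (hu | hu) v (hv | hv) huv
  · exact hS u hu v hv huv
  · exact hJS hv (Or.inr ⟨u, hu, huv⟩)
  · exact hJS hu (Or.inr ⟨v, hv, huv.symm⟩)
  · exact hJ u hu v hv huv

theorem IsCritIndep.dOn_le {S : Set α} (hS : IsCritIndep G S) (Y : Set α) :
    dOn G univ Y ≤ dOn G univ S :=
  hS.2.2 Y (subset_univ Y)

theorem IsMaxCritIndep.isCritIndep {S : Set α} (hS : IsMaxCritIndep G S) : IsCritIndep G S :=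
  hS.1

theorem IsMaxIndep.ncard_eq_alpha {S : Set α} (hS : IsMaxIndep G S) : S.ncard = alpha G := by
  have : IsGreatest {n | ∃ T ⊆ univ, IsIndep G T ∧ T.ncard = n} S.ncard := by
    refine ⟨⟨S, hS.1, hS.2.1, rfl⟩, ?_⟩
    rintro _ ⟨T, hT, hTi, rfl⟩
    exact hS.2.2 T hT hTi
  exact this.csSup_eq.symm

end

section

variable {α : Type*} [Finite α] {G : SimpleGraph α}

theorem IsIndep.ncard_add_ncard_nbhd_le {S : Set α} (hS : IsIndep G S) :
    S.ncard + (nbhd G S).ncard ≤ Nat.card α := by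
  rw [← ncard_union_eq hS.disjoint_nbhd, ← ncard_univ]
  exact ncard_le_ncard (subset_univ _)

theorem dOn_le_dOn_diff_nbhd (Y : Set α) :
    dOn G univ Y ≤ dOn G univ (Y \ nbhd G Y) := by
  have hsub : nbhd G (Y \ nbhd G Y) ⊆ nbhd G Y \ Y :=
    fun w ⟨u, ⟨huY, hun⟩, huw⟩ => ⟨⟨u, huY, huw⟩, fun hwY => hun ⟨w, hwY, huw.symm⟩⟩
  have hY := ncard_inter_add_ncard_sdiff_eq_ncard Y (nbhd G Y)
  have hN := ncard_inter_add_ncard_sdiff_eq_ncard (nbhd G Y) Y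
  have := ncard_le_ncard hsub
  rw [inter_comm] at hN
  rw [dOn_univ, dOn_univ]
  omega

theorem exists_isCritIndep : ∃ S : Set α, IsCritIndep G S := by
  obtain ⟨Y, hY⟩ := Finite.exists_max (dOn G univ)
  have hindep : IsIndep G (Y \ nbhd G Y) :=
    fun u ⟨hu, _⟩ v ⟨_, hvn⟩ huv => hvn ⟨u, hu, huv⟩
  exact ⟨_, subset_univ _, hindep, fun Z _ => (hY Z).trans (dOn_le_dOn_diff_nbhd Y)⟩

theorem exists_isMaxCritIndep : ∃ S : Set α, IsMaxCritIndep G S := by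
  obtain ⟨S₀, hS₀⟩ := exists_isCritIndep (G := G)
  have : Nonempty {S : Set α // IsCritIndep G S} := ⟨⟨S₀, hS₀⟩⟩
  obtain ⟨⟨S, hS⟩, hmax⟩ := Finite.exists_max fun S : {S : Set α // IsCritIndep G S} => S.1.ncard
  exact ⟨S, hS, fun T hT => hmax ⟨T, hT⟩⟩

theorem exists_isMaxIndepOn (W : Set α) : ∃ S, IsMaxIndepOn G W S := by
  have : Nonempty {S : Set α // S ⊆ W ∧ IsIndep G S} :=
    ⟨⟨∅, empty_subset W, fun u hu => hu.elim⟩⟩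
  obtain ⟨⟨S, hSW, hS⟩, hmax⟩ :=
    Finite.exists_max fun S : {S : Set α // S ⊆ W ∧ IsIndep G S} => S.1.ncard
  exact ⟨S, hSW, hS, fun T hTW hT => hmax ⟨T, hTW, hT⟩⟩

theorem IsIndep.ncard_le_alpha {T : Set α} (hT : IsIndep G T) : T.ncard ≤ alpha G := by
  obtain ⟨S, hS⟩ : ∃ S, IsMaxIndep G S := exists_isMaxIndepOn univ
  exact hS.ncard_eq_alpha ▸ hS.2.2 T (subset_univ T) hT

theorem IsMaxIndep.compl_subset_nbhd {S : Set α} (hS : IsMaxIndep G S) :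
    Sᶜ ⊆ nbhd G S := by
  intro v hvS
  by_contra hvN
  have hins : IsIndep G (insert v S) := by
    rintro u (rfl | hu) w (rfl | hw) huw
    · exact G.irrefl huw
    · exact hvN ⟨w, hw, huw.symm⟩
    · exact hvN ⟨u, hu, huw⟩
    · exact hS.2.1 u hu w hw huw
  have := hS.2.2 _ (subset_univ _) hins
  rw [ncard_insert_of_notMem hvS] at this
  omega

theorem isGreatest_mu :
    IsGreatest {n | ∃ M : G.Subgraph, M.IsMatching ∧ M.edgeSet.ncard = n} (mu G) := by
  have : Nonempty {M : G.Subgraph // M.IsMatching} := ⟨⟨⊥, fun v hv => hv.elim⟩⟩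
  obtain ⟨⟨M, hM⟩, hmax⟩ :=
    Finite.exists_max fun M : {M : G.Subgraph // M.IsMatching} => M.1.edgeSet.ncard
  have : IsGreatest {n | ∃ M : G.Subgraph, M.IsMatching ∧ M.edgeSet.ncard = n} M.edgeSet.ncard := by
    refine ⟨⟨M, hM, rfl⟩, ?_⟩
    rintro _ ⟨M', hM', rfl⟩
    exact hmax ⟨M', hM'⟩
  rwa [mu, this.csSup_eq]

theorem dOn_le_card_sub_two_mul_mu (Y : Set α) :
    dOn G univ Y ≤ Nat.card α - 2 * mu G := by
  obtain ⟨M, hM, hMmu⟩ := (isGreatest_mu (G := G)).1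
  choose! p hp using fun v (hv : v ∈ M.verts) => (hM hv).exists
  have hinj : InjOn p (Y ∩ M.verts) := fun u hu v hv huv =>
    hM.eq_of_adj_right (hp u hu.2) (huv ▸ hp v hv.2)
  have hmatched : (Y ∩ M.verts).ncard ≤ (nbhd G Y).ncard :=
    ncard_le_ncard_of_injOn p (fun v hv => ⟨v, hv.1, (hp v hv.2).adj_sub⟩) hinj
  have hunion := ncard_union_add_ncard_inter Y M.verts
  have hcover : (Y ∪ M.verts).ncard ≤ Nat.card α := ncard_univ α ▸ ncard_le_ncard (subset_univ _)
  have hverts := hM.ncard_verts_eq_two_mul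
  rw [dOn_univ]
  omega

theorem alpha_add_mu_le_card : alpha G + mu G ≤ Nat.card α := by
  obtain ⟨S, hS⟩ : ∃ S, IsMaxIndep G S := exists_isMaxIndepOn univ
  have hd := dOn_le_card_sub_two_mul_mu (G := G) S
  have hN := hS.2.1.ncard_add_ncard_nbhd_le
  rw [dOn_univ, hS.ncard_eq_alpha] at hd
  rw [hS.ncard_eq_alpha] at hN
  omega

theorem ncard_le_mu_of_injOn {A : Set α} {f : α → α} (hf : InjOn f A)
    (hdisj : Disjoint A (f '' A)) (hadj : ∀ a ∈ A, G.Adj a (f a)) : A.ncard ≤ mu G := by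
  obtain ⟨M, hMverts, hM⟩ := SimpleGraph.Subgraph.IsMatching.exists_of_disjoint_sets_of_equiv
    hdisj (hf.bijOn_image.equiv f) fun a => hadj a a.2
  have hverts := hM.ncard_verts_eq_two_mul
  rw [hMverts, ncard_union_eq hdisj, hf.ncard_image] at hverts
  have := (isGreatest_mu (G := G)).2 ⟨M, hM, rfl⟩
  omega

theorem ncard_le_ncard_inter_nbhd {S T : Set α} (hS : ∀ Y, dOn G univ Y ≤ dOn G univ S)
    (hT : T ⊆ nbhd G S) : T.ncard ≤ (S ∩ nbhd G T).ncard := by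
  have hsub : nbhd G (S \ nbhd G T) ⊆ nbhd G S \ T :=
    fun w ⟨u, ⟨huS, hun⟩, huw⟩ => ⟨⟨u, huS, huw⟩, fun hwT => hun ⟨w, hwT, huw.symm⟩⟩
  have hd := hS (S \ nbhd G T)
  have hS' := ncard_inter_add_ncard_sdiff_eq_ncard S (nbhd G T)
  have hN := ncard_inter_add_ncard_sdiff_eq_ncard (nbhd G S) T
  have := ncard_le_ncard hsub
  rw [inter_eq_right.mpr hT] at hN
  rw [dOn_univ, dOn_univ] at hd
  omega

theorem exists_injOn_nbhd {S : Set α} (hS : ∀ Y, dOn G univ Y ≤ dOn G univ S) :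
    ∃ f : α → α, InjOn f (nbhd G S) ∧ ∀ v ∈ nbhd G S, f v ∈ S ∧ G.Adj v (f v) := by
  refine exists_injOn_of_forall_ncard_le (fun v w => w ∈ S ∧ G.Adj v w) fun T hT => ?_
  convert ncard_le_ncard_inter_nbhd hS hT using 2
  ext b
  simp only [nbhd, mem_ofPred_eq, mem_inter_iff]
  grind

theorem IsCritIndep.ncard_nbhd_le_mu {S : Set α} (hS : IsCritIndep G S) :
    (nbhd G S).ncard ≤ mu G := by
  obtain ⟨f, hf, hfS⟩ := exists_injOn_nbhd hS.dOn_le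
  refine ncard_le_mu_of_injOn hf ?_ fun v hv => (hfS v hv).2
  refine disjoint_right.mpr ?_
  rintro _ ⟨v, hv, rfl⟩
  exact hS.2.1.disjoint_nbhd.notMem_of_mem_left (hfS v hv).1

theorem IsCritIndep.ncard_le_of_subset_union_nbhd {S J : Set α} (hS : IsCritIndep G S)
    (hJ : IsIndep G J) (hJS : J ⊆ S ∪ nbhd G S) : J.ncard ≤ S.ncard := by
  obtain ⟨f, hf, hfS⟩ := exists_injOn_nbhd hS.dOn_le
  have hsplit : J ∩ S ∪ J ∩ nbhd G S = J := by rwa [← inter_union_distrib_left, inter_eq_left]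
  have hdisj : Disjoint (J ∩ S) (J ∩ nbhd G S) :=
    hS.2.1.disjoint_nbhd.mono inter_subset_right inter_subset_right
  have hJN : (J ∩ nbhd G S).ncard ≤ (S \ J).ncard := by
    refine ncard_le_ncard_of_injOn f (fun v ⟨hvJ, hvN⟩ => ⟨(hfS v hvN).1, fun hfJ => ?_⟩)
      (hf.mono inter_subset_right)
    exact hJ v hvJ (f v) hfJ (hfS v hvN).2
  have hJ' := ncard_union_eq hdisj
  have hS' := ncard_inter_add_ncard_sdiff_eq_ncard S J
  rw [hsplit] at hJ'
  rw [inter_comm] at hS'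
  omega

theorem IsCritIndep.exists_isMaxIndep_union {S : Set α} (hS : IsCritIndep G S) :
    ∃ J ⊆ (S ∪ nbhd G S)ᶜ, IsMaxIndep G (S ∪ J) := by
  obtain ⟨J, hJS, hJ, hJmax⟩ := exists_isMaxIndepOn (G := G) (S ∪ nbhd G S)ᶜ
  refine ⟨J, hJS, subset_univ _, hS.2.1.union_of_subset_compl hJ hJS, fun T _ hT => ?_⟩
  have hin := hS.ncard_le_of_subset_union_nbhd (hT.mono inter_subset_left)
    (inter_subset_right (s := T))
  have hout := hJmax _ inter_subset_right (hT.mono inter_subset_left)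
  have hT' := ncard_inter_add_ncard_sdiff_eq_ncard T (S ∪ nbhd G S)
  rw [sdiff_eq] at hT'
  rw [ncard_union_eq (disjoint_left.mpr fun v hvS hvJ => hJS hvJ (Or.inl hvS))]
  omega

theorem dOn_add_dOn_le_dOn_union_add_dOn_inter (X Y : Set α) :
    dOn G univ X + dOn G univ Y ≤ dOn G univ (X ∪ Y) + dOn G univ (X ∩ Y) := by
  have hN : (nbhd G (X ∩ Y)).ncard ≤ (nbhd G X ∩ nbhd G Y).ncard :=
    ncard_le_ncard (subset_inter (nbhd_mono inter_subset_left) (nbhd_mono inter_subset_right))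
  have := ncard_union_add_ncard_inter X Y
  have := ncard_union_add_ncard_inter (nbhd G X) (nbhd G Y)
  simp only [dOn_univ, nbhd_union]
  omega

theorem IsCritIndep.dOn_union_le_dOn_union_diff {S : Set α} (hS : IsCritIndep G S) (T : Set α) :
    dOn G univ (S ∪ T) ≤ dOn G univ (S ∪ T \ (S ∪ nbhd G S)) := by
  -- Removing `T ∩ N(S)` costs its vertices but takes `S ∩ N(T)` out of the neighbourhood,
  -- and the matching of `N(S)` into `S` maps the former injectively into the latter.
  obtain ⟨f, hf, hfS⟩ := exists_injOn_nbhd hS.dOn_le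
  set U := S ∪ T \ (S ∪ nbhd G S)
  have hsplit : U ∪ T ∩ nbhd G S = S ∪ T := by
    ext v
    simp only [U, mem_union, mem_sdiff, mem_inter_iff]
    tauto
  have hdisj : Disjoint U (T ∩ nbhd G S) := by
    refine disjoint_union_left.mpr ⟨?_, ?_⟩
    · exact hS.2.1.disjoint_nbhd.mono_right inter_subset_right
    · exact disjoint_left.mpr fun v hv hv' => hv.2 (Or.inr hv'.2)
  have hNU : nbhd G U ⊆ nbhd G (S ∪ T) \ (S ∩ nbhd G T) := by
    rintro w ⟨u, hu, huw⟩
    refine ⟨nbhd_mono (union_subset_union_right S sdiff_subset) ⟨u, hu, huw⟩, fun ⟨hwS, _⟩ => ?_⟩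
    rcases hu with huS | ⟨_, huSN⟩
    · exact hS.2.1 u huS w hwS huw
    · exact huSN (Or.inr ⟨w, hwS, huw.symm⟩)
  have hmatched : (T ∩ nbhd G S).ncard ≤ (S ∩ nbhd G T).ncard :=
    ncard_le_ncard_of_injOn f (fun v ⟨hvT, hvN⟩ => ⟨(hfS v hvN).1, v, hvT, (hfS v hvN).2⟩)
      (hf.mono inter_subset_right)
  have hSNT : S ∩ nbhd G T ⊆ nbhd G (S ∪ T) := fun w hw => nbhd_mono subset_union_right hw.2
  have hcardU := ncard_union_eq hdisj
  have hcardN := ncard_le_ncard hNU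
  have := ncard_sdiff hSNT
  have := ncard_le_ncard hSNT
  rw [hsplit] at hcardU
  rw [dOn_univ, dOn_univ]
  omega

theorem IsMaxCritIndep.subset_union_nbhd {S T : Set α} (hS : IsMaxCritIndep G S)
    (hT : IsMaxCritIndep G T) : T ⊆ S ∪ nbhd G S := by
  have hScrit := hS.isCritIndep
  have hST : dOn G univ S ≤ dOn G univ (S ∪ T) := by
    have := dOn_add_dOn_le_dOn_union_add_dOn_inter (G := G) S T
    have := hScrit.dOn_le (S ∩ T)
    have := hT.isCritIndep.dOn_le S
    omega
  have hU : IsCritIndep G (S ∪ T \ (S ∪ nbhd G S)) :=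
    ⟨subset_univ _,
      hScrit.2.1.union_of_subset_compl (hT.isCritIndep.2.1.mono sdiff_subset) fun _ hv => hv.2,
      fun Y _ => (hScrit.dOn_le Y).trans (hST.trans (hScrit.dOn_union_le_dOn_union_diff T))⟩
  have hcard := hS.2 _ hU
  rw [ncard_union_eq (disjoint_left.mpr fun v hvS hv => hv.2 (Or.inl hvS))] at hcard
  have hempty : T \ (S ∪ nbhd G S) = ∅ := (ncard_eq_zero).mp (by omega)
  exact sdiff_eq_empty.mp hempty

end

section

variable {α : Type*} [Fintype α] {G : SimpleGraph α}

theorem IsCritIndep.isKE_of_isMaxIndep {S : Set α}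
    (hS : IsCritIndep G S) (hmax : IsMaxIndep G S) : IsKE G := by
  have hN := hS.ncard_nbhd_le_mu
  have hcompl := ncard_le_ncard hmax.compl_subset_nbhd
  have hsplit := ncard_add_ncard_compl S
  have hle := alpha_add_mu_le_card (G := G)
  have hα := hmax.ncard_eq_alpha
  rw [IsKE, ← Nat.card_eq_fintype_card]
  omega

theorem IsKE.isCritIndep_of_isMaxIndep (hKE : IsKE G) {S : Set α} (hS : IsMaxIndep G S) :
    IsCritIndep G S := by
  refine ⟨subset_univ _, hS.2.1, fun Y _ => ?_⟩
  have hY := dOn_le_card_sub_two_mul_mu (G := G) Y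
  have hN := hS.2.1.ncard_add_ncard_nbhd_le
  have hα := hS.ncard_eq_alpha
  rw [IsKE, ← Nat.card_eq_fintype_card] at hKE
  rw [dOn_univ S]
  omega

theorem IsKE.isMaxCritIndep_iff (hKE : IsKE G) {S : Set α} :
    IsMaxCritIndep G S ↔ IsMaxIndep G S := by
  obtain ⟨S₀, hS₀⟩ : ∃ S, IsMaxIndep G S := exists_isMaxIndepOn univ
  refine ⟨fun hS => ⟨subset_univ _, hS.isCritIndep.2.1, fun T _ hT => ?_⟩,
    fun hS => ⟨hKE.isCritIndep_of_isMaxIndep hS, fun T hT => ?_⟩⟩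
  · have := hS.2 S₀ (hKE.isCritIndep_of_isMaxIndep hS₀)
    have := hT.ncard_le_alpha
    have := hS₀.ncard_eq_alpha
    omega
  · exact hS.ncard_eq_alpha ▸ hT.2.1.ncard_le_alpha

end

/-- `G` is König-Egerváry iff `diadem(G) = corona(G)`. -/
theorem stmt12 (G : SimpleGraph V) : IsKE G ↔ diadem G = corona G := by
  refine ⟨fun hKE => congrArg sUnion (ext fun S => hKE.isMaxCritIndep_iff), fun h => ?_⟩
  obtain ⟨S, hS⟩ := exists_isMaxCritIndep (G := G)
  obtain ⟨J, hJS, hmax⟩ := hS.isCritIndep.exists_isMaxIndep_union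
  have hJ : J = ∅ := eq_empty_of_forall_notMem fun v hvJ => by
    obtain ⟨T, hT, hvT⟩ : v ∈ diadem G := h ▸ ⟨S ∪ J, hmax, Or.inr hvJ⟩
    exact hJS hvJ (hS.subset_union_nbhd hT hvT)
  rw [hJ, union_empty] at hmax
  exact hS.isCritIndep.isKE_of_isMaxIndep hmax
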